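/- For every p > 1 there exist positive constants c_p and C_p such that for all real a, b: c_p·(b^{⟨p/2⟩} - a^{⟨p/2⟩})² ≤ F_p(a,b) ≤ C_p·(b^{⟨p/2⟩} - a^{⟨p/2⟩})², where F_p(a,b) := |b|^p - |a|^p - p·a^{⟨p-1⟩}·(b-a) and a^{⟨k⟩} := |a|^k·sgn(a). -/

import Mathlib

open Real Set
noncomputable def sPow (a k : ℝ) : ℝ := |a| ^ k * Real.sign a

noncomputable def Fp (p a b : ℝ) : ℝ := |b| ^ p - |a| ^ p - p * sPow a (p - 1) * (b - a)

lemma log_ge_div {t : ℝ} (ht : 0 < t) : (t-1)/t ≤ Real.log t := by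
  have h := Real.log_le_sub_one_of_pos (show (0:ℝ) < t⁻¹ by positivity)
  rw [Real.log_inv] at h
  have := ht.ne'
  rw [div_le_iff₀ ht]
  nlinarith [h, ht, mul_pos ht ht, (by field_simp : t⁻¹ * t = 1)]

lemma exp_sub_one_le {x : ℝ} : Real.exp x - 1 ≤ x * Real.exp x := by
  have h1 := Real.add_one_le_exp (-x)
  have h2 : Real.exp (-x) * Real.exp x = 1 := by
    rw [← Real.exp_add]; simp
  nlinarith [Real.exp_pos x, mul_le_mul_of_nonneg_right h1 (Real.exp_pos x).le]

lemma rpow_est_ge {r t : ℝ} (hr : 0 < r) (ht : 1 ≤ t) : r*(t-1)/t ≤ t^r - 1 := by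
  have ht0 : (0:ℝ) < t := lt_of_lt_of_le one_pos ht
  rw [Real.rpow_def_of_pos ht0]
  have h1 : (t-1)/t ≤ Real.log t := log_ge_div ht0
  have h2 := Real.add_one_le_exp (Real.log t * r)
  have h3 : r * ((t-1)/t) ≤ r * Real.log t := by
    exact mul_le_mul_of_nonneg_left h1 hr.le
  have : r*(t-1)/t = r * ((t-1)/t) := by ring
  nlinarith [h2]

lemma rpow_est_le {r t : ℝ} (hr : 0 < r) (ht : 1 ≤ t) : t^r - 1 ≤ r*(t-1)*t^r := by
  have ht0 : (0:ℝ) < t := lt_of_lt_of_le one_pos ht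
  rw [Real.rpow_def_of_pos ht0]
  have h1 : Real.log t ≤ t - 1 := Real.log_le_sub_one_of_pos ht0
  have h2 : Real.exp (Real.log t * r) - 1 ≤ (Real.log t * r) * Real.exp (Real.log t * r) :=
    exp_sub_one_le
  have hE := (Real.exp_pos (Real.log t * r)).le
  nlinarith [mul_le_mul_of_nonneg_right (mul_le_mul_of_nonneg_right h1 hr.le) hE]

lemma rpow_est_ge' {r t : ℝ} (hr : 0 < r) (ht0 : 0 < t) (ht : t ≤ 1) :
    r*(1-t)*t^r ≤ 1 - t^r := by
  rw [Real.rpow_def_of_pos ht0]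
  have h1 : Real.log t ≤ t - 1 := Real.log_le_sub_one_of_pos ht0
  -- -log t * r ≥ r (1-t) ≥ 0 ; exp(-x) ≥ 1 - x with x = log t * r
  have h2 := Real.add_one_le_exp (-(Real.log t * r))
  have h3 : Real.exp (-(Real.log t * r)) * Real.exp (Real.log t * r) = 1 := by
    rw [← Real.exp_add]; simp
  have hE := (Real.exp_pos (Real.log t * r)).le
  have h4 : r*(1-t) ≤ -(Real.log t * r) := by nlinarith
  nlinarith [mul_le_mul_of_nonneg_right h2 hE, mul_le_mul_of_nonneg_right h4 hE]

lemma rpow_est_le' {r t : ℝ} (hr : 0 < r) (ht0 : 0 < t) (ht : t ≤ 1) :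
    1 - t^r ≤ r*(1-t)/t := by
  rw [Real.rpow_def_of_pos ht0]
  have h1 : (t-1)/t ≤ Real.log t := log_ge_div ht0
  have h2 := Real.add_one_le_exp (Real.log t * r)
  have h3 : r * ((t-1)/t) ≤ r * Real.log t := mul_le_mul_of_nonneg_left h1 hr.le
  have : r*(1-t)/t = -(r * ((t-1)/t)) := by ring
  nlinarith [h2]

section W
variable {q t : ℝ}

-- setting β = q-1, r = 2-q, so β + r = 1
lemma w_split (ht0 : 0 < t) (q : ℝ) : t - t^(q-1) = t^(q-1) * (t^(2-q) - 1) := by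
  have : t^(q-1) * t^(2-q) = t := by
    rw [← Real.rpow_add ht0]; norm_num
  rw [mul_sub, this, mul_one]

lemma w_lower_right (hq0 : 0 ≤ q) (hq2 : q < 2) (ht : 1 ≤ t) :
    (2-q)*(t-1)/t^2 ≤ t - t^(q-1) := by
  have ht0 : (0:ℝ) < t := lt_of_lt_of_le one_pos ht
  rw [w_split ht0 q]
  have hr : (0:ℝ) < 2 - q := by linarith
  have h1 : (2-q)*(t-1)/t ≤ t^(2-q) - 1 := rpow_est_ge hr ht
  have h2 : t^(-1:ℝ) ≤ t^(q-1) := Real.rpow_le_rpow_of_exponent_le ht (by linarith)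
  have h2' : t⁻¹ ≤ t^(q-1) := by rwa [Real.rpow_neg_one] at h2
  have hnn : (0:ℝ) ≤ (2-q)*(t-1)/t :=
    div_nonneg (mul_nonneg hr.le (by linarith)) ht0.le
  have hid : (2-q)*(t-1)/t^2 = t⁻¹ * ((2-q)*(t-1)/t) := by
    rw [pow_two, ← div_div]
    ring
  rw [hid]
  exact mul_le_mul h2' h1 hnn (Real.rpow_nonneg ht0.le _)

lemma w_upper_right (hq0 : 0 ≤ q) (hq2 : q < 2) (ht : 1 ≤ t) :
    t - t^(q-1) ≤ (2-q)*(t-1)*t := by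
  have ht0 : (0:ℝ) < t := lt_of_lt_of_le one_pos ht
  rw [w_split ht0 q]
  have hr : (0:ℝ) < 2 - q := by linarith
  have h1 : t^(2-q) - 1 ≤ (2-q)*(t-1)*t^(2-q) := rpow_est_le hr ht
  have h2 : t^(q-1) * (t^(2-q) - 1) ≤ t^(q-1) * ((2-q)*(t-1)*t^(2-q)) :=
    mul_le_mul_of_nonneg_left h1 (Real.rpow_nonneg ht0.le _)
  have h3 : t^(q-1) * t^(2-q) = t := by rw [← Real.rpow_add ht0]; norm_num
  calc t^(q-1) * (t^(2-q) - 1) ≤ t^(q-1) * ((2-q)*(t-1)*t^(2-q)) := h2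
    _ = (2-q)*(t-1)*t := by rw [show t^(q-1) * ((2-q)*(t-1)*t^(2-q)) = (2-q)*(t-1)*(t^(q-1)*t^(2-q)) by ring, h3]

lemma w_lower_left (hq0 : 0 ≤ q) (hq2 : q < 2) (ht0 : 0 < t) (ht : t ≤ 1) :
    (2-q)*(1-t)*t ≤ t^(q-1) - t := by
  have hr : (0:ℝ) < 2 - q := by linarith
  have h1 : (2-q)*(1-t)*t^(2-q) ≤ 1 - t^(2-q) := rpow_est_ge' hr ht0 ht
  have h2 : t^(q-1) * ((2-q)*(1-t)*t^(2-q)) ≤ t^(q-1) * (1 - t^(2-q)) :=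
    mul_le_mul_of_nonneg_left h1 (Real.rpow_nonneg ht0.le _)
  have h3 : t^(q-1) * t^(2-q) = t := by rw [← Real.rpow_add ht0]; norm_num
  have h4 : t^(q-1) - t = t^(q-1) * (1 - t^(2-q)) := by
    rw [mul_sub, h3, mul_one]
  rw [h4]
  calc (2-q)*(1-t)*t = t^(q-1)*((2-q)*(1-t)*t^(2-q)) := by
        rw [show t^(q-1) * ((2-q)*(1-t)*t^(2-q)) = (2-q)*(1-t)*(t^(q-1)*t^(2-q)) by ring, h3]
    _ ≤ t^(q-1) * (1 - t^(2-q)) := h2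

lemma rpow_le_two_of_half (hq1 : -1 ≤ q - 1) (hq2 : q - 1 ≤ 1) (ht0 : (1:ℝ)/2 ≤ t) (ht : t ≤ 1) :
    t^(q-1) ≤ 2 := by
  have htpos : (0:ℝ) < t := by linarith
  rcases le_or_gt 0 (q-1) with h | h
  · have : t^(q-1) ≤ 1 := Real.rpow_le_one htpos.le ht h
    linarith
  · have h1 : t^(q-1) = (t⁻¹)^(-(q-1)) := by
      rw [Real.inv_rpow htpos.le, Real.rpow_neg htpos.le]; simp
    rw [h1]
    have h2 : t⁻¹ ≤ 2 := by
      rw [inv_le_comm₀ htpos (by norm_num)]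
      linarith
    calc (t⁻¹)^(-(q-1)) ≤ (2:ℝ)^(-(q-1)) :=
          Real.rpow_le_rpow (by positivity) h2 (by linarith)
      _ ≤ (2:ℝ)^(1:ℝ) := Real.rpow_le_rpow_of_exponent_le one_le_two (by linarith)
      _ = 2 := Real.rpow_one 2

lemma w_upper_left (hq0 : 0 ≤ q) (hq2 : q < 2) (ht0 : (1:ℝ)/2 ≤ t) (ht : t ≤ 1) :
    t^(q-1) - t ≤ 4*(2-q)*(1-t) := by
  have htpos : (0:ℝ) < t := by linarith
  have hr : (0:ℝ) < 2 - q := by linarith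
  have h1 : 1 - t^(2-q) ≤ (2-q)*(1-t)/t := rpow_est_le' hr htpos ht
  have h4 : t^(q-1) - t = t^(q-1) * (1 - t^(2-q)) := by
    have h3 : t^(q-1) * t^(2-q) = t := by rw [← Real.rpow_add htpos]; norm_num
    rw [mul_sub, h3, mul_one]
  rw [h4]
  have hb : t^(q-1) ≤ 2 := rpow_le_two_of_half (by linarith) (by linarith) ht0 ht
  have hnn : 0 ≤ 1 - t^(2-q) := by
    have : t^(2-q) ≤ 1 := Real.rpow_le_one htpos.le ht hr.le
    linarith
  have h5 : t^(q-1) * (1 - t^(2-q)) ≤ 2 * ((2-q)*(1-t)/t) := by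
    apply mul_le_mul hb h1 hnn (by norm_num)
  have hA : 0 ≤ (2-q)*(1-t) := mul_nonneg hr.le (by linarith)
  have h6 : (2-q)*(1-t)/t ≤ 2*((2-q)*(1-t)) := by
    rw [div_le_iff₀ htpos]
    nlinarith
  linarith

end W
noncomputable def psi (p s : ℝ) : ℝ := s^2 - 1 - p*(s^(2/p) - 1)

lemma psi_one (p : ℝ) : psi p 1 = 0 := by simp [psi]

lemma hasDerivAt_psi {p s : ℝ} (hp : 1 < p) (hs : 0 < s) :
    HasDerivAt (psi p) (2*(s - s^(2/p-1))) s := by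
  have hp0 : (0:ℝ) < p := by linarith
  have h1 : HasDerivAt (fun t : ℝ => t^2) (2*s) s := by
    simpa using hasDerivAt_pow 2 s
  have h2 : HasDerivAt (fun t : ℝ => t^(2/p)) ((2/p) * s^(2/p-1)) s :=
    Real.hasDerivAt_rpow_const (Or.inl hs.ne')
  have h3 := (h1.sub_const 1).sub ((h2.sub_const 1).const_mul p)
  refine h3.congr_deriv ?_
  have hp2 : p * (2/p) = 2 := by field_simp
  linear_combination (-(s^(2/p-1))) * hp2

lemma q_facts {p : ℝ} (hp : 1 < p) : 0 < 2/p ∧ 2/p < 2 := by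
  constructor
  · positivity
  · rw [div_lt_iff₀ (by linarith)]; linarith

lemma psi_lower_right {p : ℝ} (hp : 1 < p) {T : ℝ} (hT : 1 ≤ T) {s : ℝ}
    (h1s : 1 ≤ s) (hsT : s ≤ T) : (2-2/p)/T^2 * (s-1)^2 ≤ psi p s := by
  obtain ⟨hq0, hq2⟩ := q_facts hp
  set c := (2-2/p)/T^2 with hc
  have hT0 : (0:ℝ) < T := by linarith
  set D := fun t : ℝ => psi p t - c*(t-1)^2 with hD
  have hderiv : ∀ x : ℝ, 0 < x → HasDerivAt D (2*(x - x^(2/p-1)) - c*(2*(x-1))) x := by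
    intro x hx
    have h2 : HasDerivAt (fun t : ℝ => (t-1)^2) (2*(x-1)) x := by
      have := ((hasDerivAt_id x).sub_const 1).fun_pow 2
      simpa using this
    exact (hasDerivAt_psi hp hx).sub (h2.const_mul c)
  have hmono : MonotoneOn D (Set.Icc 1 T) := by
    apply monotoneOn_of_deriv_nonneg (convex_Icc 1 T)
    · intro x hx
      exact (hderiv x (by linarith [hx.1])).continuousAt.continuousWithinAt
    · rw [interior_Icc]
      intro x hx
      exact (hderiv x (by linarith [hx.1])).differentiableAt.differentiableWithinAt
    · rw [interior_Icc]
      intro x hx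
      rw [(hderiv x (by linarith [hx.1])).deriv]
      have hx1 : 1 ≤ x := hx.1.le
      have hw := w_lower_right hq0.le hq2 hx1
      have hcomp : c*(x-1) ≤ (2-2/p)*(x-1)/x^2 := by
        rw [hc]
        rw [div_mul_eq_mul_div]
        apply div_le_div_of_nonneg_left ?_ (by positivity) ?_
        · nlinarith
        · nlinarith [hx.2.le]
      linarith
  have h1T : (1:ℝ) ∈ Set.Icc (1:ℝ) T := ⟨le_refl 1, hT⟩
  have hsI : s ∈ Set.Icc (1:ℝ) T := ⟨h1s, hsT⟩
  have := hmono h1T hsI h1s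
  have hD1 : D 1 = 0 := by simp [hD, psi_one]
  simp only [hD] at this hD1
  linarith

lemma psi_upper_right {p : ℝ} (hp : 1 < p) {T : ℝ} (hT : 1 ≤ T) {s : ℝ}
    (h1s : 1 ≤ s) (hsT : s ≤ T) : psi p s ≤ (2-2/p)*T * (s-1)^2 := by
  obtain ⟨hq0, hq2⟩ := q_facts hp
  set C := (2-2/p)*T with hC
  set E := fun t : ℝ => C*(t-1)^2 - psi p t with hE
  have hderiv : ∀ x : ℝ, 0 < x → HasDerivAt E (C*(2*(x-1)) - 2*(x - x^(2/p-1))) x := by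
    intro x hx
    have h2 : HasDerivAt (fun t : ℝ => (t-1)^2) (2*(x-1)) x := by
      simpa using ((hasDerivAt_id x).sub_const 1).fun_pow 2
    exact (h2.const_mul C).sub (hasDerivAt_psi hp hx)
  have hmono : MonotoneOn E (Set.Icc 1 T) := by
    apply monotoneOn_of_deriv_nonneg (convex_Icc 1 T)
    · intro x hx
      exact (hderiv x (by linarith [hx.1])).continuousAt.continuousWithinAt
    · rw [interior_Icc]
      intro x hx
      exact (hderiv x (by linarith [hx.1])).differentiableAt.differentiableWithinAt
    · rw [interior_Icc]
      intro x hx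
      rw [(hderiv x (by linarith [hx.1])).deriv]
      have hw := w_upper_right hq0.le hq2 hx.1.le
      have : (2-2/p)*(x-1)*x ≤ C*(x-1) := by
        rw [hC]
        nlinarith [mul_nonneg (mul_nonneg (by linarith : (0:ℝ) ≤ 2-2/p)
          (by linarith [hx.1] : (0:ℝ) ≤ x-1)) (by linarith [hx.2.le] : (0:ℝ) ≤ T-x)]
      linarith
  have := hmono ⟨le_refl 1, hT⟩ ⟨h1s, hsT⟩ h1s
  have hE1 : E 1 = 0 := by simp [hE, psi_one]
  simp only [hE] at this hE1
  linarith

lemma psi_lower_left {p : ℝ} (hp : 1 < p) {s : ℝ}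
    (hhalf : 1/2 ≤ s) (hs1 : s ≤ 1) : (2-2/p)/4 * (s-1)^2 ≤ psi p s := by
  obtain ⟨hq0, hq2⟩ := q_facts hp
  set c := (2-2/p)/4 with hc
  set D := fun t : ℝ => psi p t - c*(t-1)^2 with hD
  have hderiv : ∀ x : ℝ, 0 < x → HasDerivAt D (2*(x - x^(2/p-1)) - c*(2*(x-1))) x := by
    intro x hx
    have h2 : HasDerivAt (fun t : ℝ => (t-1)^2) (2*(x-1)) x := by
      simpa using ((hasDerivAt_id x).sub_const 1).fun_pow 2
    exact (hasDerivAt_psi hp hx).sub (h2.const_mul c)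
  have hanti : AntitoneOn D (Set.Icc (1/2 : ℝ) 1) := by
    apply antitoneOn_of_deriv_nonpos (convex_Icc _ _)
    · intro x hx
      exact (hderiv x (by linarith [hx.1])).continuousAt.continuousWithinAt
    · rw [interior_Icc]
      intro x hx
      exact (hderiv x (by linarith [hx.1])).differentiableAt.differentiableWithinAt
    · rw [interior_Icc]
      intro x hx
      rw [(hderiv x (by linarith [hx.1])).deriv]
      have hx0 : (0:ℝ) < x := by linarith [hx.1]
      have hw := w_lower_left hq0.le hq2 hx0 hx.2.le
      -- x^(q-1) - x ≥ (2-2/p)(1-x)x ≥ (2-2/p)(1-x)/2 = 2c(1-x)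
      have h1 : (2-2/p)*(1-x)*(1/2) ≤ (2-2/p)*(1-x)*x := by
        nlinarith [mul_nonneg (mul_nonneg (by linarith : (0:ℝ) ≤ 2-2/p)
          (by linarith [hx.2.le] : (0:ℝ) ≤ 1-x)) (by linarith [hx.1] : (0:ℝ) ≤ x-1/2)]
      rw [hc]
      nlinarith
  have := hanti ⟨hhalf, hs1⟩ ⟨by norm_num, le_refl 1⟩ hs1
  have hD1 : D 1 = 0 := by simp [hD, psi_one]
  simp only [hD] at this hD1
  linarith

lemma psi_upper_left {p : ℝ} (hp : 1 < p) {s : ℝ}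
    (hhalf : 1/2 ≤ s) (hs1 : s ≤ 1) : psi p s ≤ 4*(2-2/p) * (s-1)^2 := by
  obtain ⟨hq0, hq2⟩ := q_facts hp
  set C := 4*(2-2/p) with hC
  set E := fun t : ℝ => C*(t-1)^2 - psi p t with hE
  have hderiv : ∀ x : ℝ, 0 < x → HasDerivAt E (C*(2*(x-1)) - 2*(x - x^(2/p-1))) x := by
    intro x hx
    have h2 : HasDerivAt (fun t : ℝ => (t-1)^2) (2*(x-1)) x := by
      simpa using ((hasDerivAt_id x).sub_const 1).fun_pow 2
    exact (h2.const_mul C).sub (hasDerivAt_psi hp hx)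
  have hanti : AntitoneOn E (Set.Icc (1/2 : ℝ) 1) := by
    apply antitoneOn_of_deriv_nonpos (convex_Icc _ _)
    · intro x hx
      exact (hderiv x (by linarith [hx.1])).continuousAt.continuousWithinAt
    · rw [interior_Icc]
      intro x hx
      exact (hderiv x (by linarith [hx.1])).differentiableAt.differentiableWithinAt
    · rw [interior_Icc]
      intro x hx
      rw [(hderiv x (by linarith [hx.1])).deriv]
      have hw := w_upper_left hq0.le hq2 hx.1.le hx.2.le
      rw [hC]
      nlinarith
  have := hanti ⟨hhalf, hs1⟩ ⟨by norm_num, le_refl 1⟩ hs1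
  have hE1 : E 1 = 0 := by simp [hE, psi_one]
  simp only [hE] at this hE1
  linarith

lemma psi_antitoneOn {p : ℝ} (hp : 1 < p) : AntitoneOn (psi p) (Set.Ioc (0:ℝ) 1) := by
  obtain ⟨hq0, hq2⟩ := q_facts hp
  apply antitoneOn_of_deriv_nonpos (convex_Ioc _ _)
  · intro x hx
    exact (hasDerivAt_psi hp hx.1).continuousAt.continuousWithinAt
  · rw [interior_Ioc]
    intro x hx
    exact (hasDerivAt_psi hp hx.1).differentiableAt.differentiableWithinAt
  · rw [interior_Ioc]
    intro x hx
    rw [(hasDerivAt_psi hp hx.1).deriv]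
    have h1 : x^(1:ℝ) ≤ x^(2/p-1) :=
      Real.rpow_le_rpow_of_exponent_ge hx.1 hx.2.le (by linarith)
    rw [Real.rpow_one] at h1
    linarith
lemma psi_tail {p : ℝ} (hp : 1 < p) :
    ∃ T : ℝ, 2 ≤ T ∧ ∀ s : ℝ, T ≤ s →
      1/2*(s-1)^2 ≤ psi p s ∧ psi p s ≤ (4+p)*(s-1)^2 := by
  obtain ⟨hq0, hq2⟩ := q_facts hp
  have hr : (0:ℝ) < 2 - 2/p := by linarith
  refine ⟨max 2 ((4*p)^((2-2/p)⁻¹)), le_max_left _ _, ?_⟩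
  set T := max 2 ((4*p)^((2-2/p)⁻¹)) with hTdef
  have hT2 : (2:ℝ) ≤ T := le_max_left _ _
  have hT0 : (0:ℝ) < T := by linarith
  have hTr : 4*p ≤ T^(2-2/p) := by
    have h1 : ((4*p)^((2-2/p)⁻¹))^(2-2/p) = 4*p := by
      rw [← Real.rpow_mul (by positivity : (0:ℝ) ≤ 4*p), inv_mul_cancel₀ hr.ne',
        Real.rpow_one]
    calc 4*p = ((4*p)^((2-2/p)⁻¹))^(2-2/p) := h1.symm
      _ ≤ T^(2-2/p) :=
          Real.rpow_le_rpow (Real.rpow_nonneg (by positivity) _) (le_max_right _ _) hr.le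
  intro s hTs
  have hs2 : (2:ℝ) ≤ s := le_trans hT2 hTs
  have hs0 : (0:ℝ) < s := by linarith
  set A := s^(2/p) with hA
  have hA0 : (0:ℝ) ≤ A := Real.rpow_nonneg hs0.le _
  have hBA : s^(2-2/p) * A = s^2 := by
    rw [hA, ← Real.rpow_add hs0, show 2-2/p+2/p = (2:ℝ) by ring,
      show (2:ℝ) = ((2:ℕ):ℝ) by norm_num, Real.rpow_natCast]
  have hB : 4*p ≤ s^(2-2/p) :=
    le_trans hTr (Real.rpow_le_rpow hT0.le hTs hr.le)
  have hpA : p*A ≤ s^2/4 := by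
    nlinarith [mul_le_mul_of_nonneg_right hB hA0]
  have hpsi : psi p s = s^2 - 1 - p*A + p := by
    rw [psi, hA]; ring
  constructor
  · rw [hpsi]; nlinarith
  · rw [hpsi]
    have hpA0 : 0 ≤ p*A := mul_nonneg (by linarith) hA0
    nlinarith [mul_nonneg (by linarith : (0:ℝ) ≤ 3*s-2) (by linarith : (0:ℝ) ≤ s-2)]

lemma psi_bounds {p : ℝ} (hp : 1 < p) :
    ∃ c C : ℝ, 0 < c ∧ 0 < C ∧ ∀ s : ℝ, 0 < s →
      c*(s-1)^2 ≤ psi p s ∧ psi p s ≤ C*(s-1)^2 := by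
  obtain ⟨hq0, hq2⟩ := q_facts hp
  have hr : (0:ℝ) < 2 - 2/p := by linarith
  obtain ⟨T, hT2, htail⟩ := psi_tail hp
  have hT1 : (1:ℝ) ≤ T := by linarith
  have hT0 : (0:ℝ) < T := by linarith
  refine ⟨min (min ((2-2/p)/T^2) ((2-2/p)/4)) (min ((2-2/p)/16) (1/2)),
    max (max ((2-2/p)*T) (4*(2-2/p))) (max (4*p) (4+p)), ?_, ?_, ?_⟩
  · apply lt_min (lt_min (by positivity) (by positivity)) (lt_min (by positivity) (by norm_num))
  · apply lt_of_lt_of_le (by positivity : (0:ℝ) < (2-2/p)*T)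
    exact le_trans (le_max_left _ _) (le_max_left _ _)
  intro s hs0
  set c := min (min ((2-2/p)/T^2) ((2-2/p)/4)) (min ((2-2/p)/16) (1/2)) with hc
  set C := max (max ((2-2/p)*T) (4*(2-2/p))) (max (4*p) (4+p)) with hC
  have hsq : (0:ℝ) ≤ (s-1)^2 := sq_nonneg _
  rcases le_or_gt s (1/2) with h | half
  · -- s ∈ (0, 1/2]
    have hps : psi p (1/2) ≤ psi p s := by
      apply psi_antitoneOn hp ⟨hs0, by linarith⟩ ⟨by norm_num, by norm_num⟩ h
    have hhalf : (2-2/p)/16 ≤ psi p (1/2) := by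
      have := psi_lower_left hp (le_refl (1/2:ℝ)) (by norm_num)
      calc (2-2/p)/16 = (2-2/p)/4 * ((1/2:ℝ)-1)^2 := by ring
        _ ≤ psi p (1/2) := this
    have hsqle : (s-1)^2 ≤ 1 := by nlinarith
    constructor
    · calc c*(s-1)^2 ≤ (2-2/p)/16 * 1 := by
            apply mul_le_mul ?_ hsqle hsq (by positivity)
            exact le_trans (min_le_right _ _) (min_le_left _ _)
        _ ≤ psi p s := by linarith
    · have hup : psi p s ≤ 4*p*(s-1)^2 := by
        have hAnn : (0:ℝ) ≤ p * s^(2/p) := mul_nonneg (by linarith) (Real.rpow_nonneg hs0.le _)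
        have hps2 : psi p s = s^2 - 1 - p*s^(2/p) + p := by rw [psi]; ring
        rw [hps2]
        have hq14 : 1/4 ≤ (s-1)^2 := by nlinarith
        have hss : s^2 ≤ 1/4 := by nlinarith
        have := mul_le_mul_of_nonneg_left hq14 (by linarith : (0:ℝ) ≤ 4*p)
        linarith
      calc psi p s ≤ 4*p*(s-1)^2 := hup
        _ ≤ C*(s-1)^2 := by
            apply mul_le_mul_of_nonneg_right ?_ hsq
            exact le_trans (le_max_left _ _) (le_max_right _ _)
  rcases le_or_gt s 1 with h1 | h1
  · -- s ∈ [1/2, 1]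
    have hlow := psi_lower_left hp half.le h1
    have hupp := psi_upper_left hp half.le h1
    constructor
    · calc c*(s-1)^2 ≤ (2-2/p)/4*(s-1)^2 := by
            apply mul_le_mul_of_nonneg_right ?_ hsq
            exact le_trans (min_le_left _ _) (min_le_right _ _)
        _ ≤ psi p s := hlow
    · calc psi p s ≤ 4*(2-2/p)*(s-1)^2 := hupp
        _ ≤ C*(s-1)^2 := by
            apply mul_le_mul_of_nonneg_right ?_ hsq
            exact le_trans (le_max_right _ _) (le_max_left _ _)
  rcases le_or_gt s T with hsT | hsT
  · -- s ∈ [1, T]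
    have hlow := psi_lower_right hp hT1 h1.le hsT
    have hupp := psi_upper_right hp hT1 h1.le hsT
    constructor
    · calc c*(s-1)^2 ≤ (2-2/p)/T^2*(s-1)^2 := by
            apply mul_le_mul_of_nonneg_right ?_ hsq
            exact le_trans (min_le_left _ _) (min_le_left _ _)
        _ ≤ psi p s := hlow
    · calc psi p s ≤ (2-2/p)*T*(s-1)^2 := hupp
        _ ≤ C*(s-1)^2 := by
            apply mul_le_mul_of_nonneg_right ?_ hsq
            exact le_trans (le_max_left _ _) (le_max_left _ _)
  · -- s ≥ T
    obtain ⟨hlow, hupp⟩ := htail s hsT.le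
    constructor
    · calc c*(s-1)^2 ≤ 1/2*(s-1)^2 := by
            apply mul_le_mul_of_nonneg_right ?_ hsq
            exact le_trans (min_le_right _ _) (min_le_right _ _)
        _ ≤ psi p s := hlow
    · calc psi p s ≤ (4+p)*(s-1)^2 := hupp
        _ ≤ C*(s-1)^2 := by
            apply mul_le_mul_of_nonneg_right ?_ hsq
            exact le_trans (le_max_right _ _) (le_max_right _ _)
lemma sPow_one' (k : ℝ) : sPow 1 k = 1 := by
  simp [sPow, Real.sign_one]

lemma sPow_zero' (k : ℝ) : sPow 0 k = 0 := by
  simp [sPow]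

lemma sPow_of_pos {b : ℝ} (hb : 0 < b) (k : ℝ) : sPow b k = b^k := by
  simp [sPow, abs_of_pos hb, Real.sign_of_pos hb]

lemma real_sign_neg' (x : ℝ) : Real.sign (-x) = - Real.sign x := by
  rcases lt_trichotomy x 0 with h|h|h
  · rw [Real.sign_of_neg h, Real.sign_of_pos (by linarith : 0 < -x)]; norm_num
  · simp [h]
  · rw [Real.sign_of_pos h, Real.sign_of_neg (by linarith : -x < 0)]

lemma sPow_neg' (b k : ℝ) : sPow (-b) k = - sPow b k := by
  simp [sPow, abs_neg, real_sign_neg']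

lemma real_sign_mul_pos {t : ℝ} (ht : 0 < t) (x : ℝ) : Real.sign (t*x) = Real.sign x := by
  rcases lt_trichotomy x 0 with h|h|h
  · rw [Real.sign_of_neg h, Real.sign_of_neg (mul_neg_of_pos_of_neg ht h)]
  · simp [h]
  · rw [Real.sign_of_pos h, Real.sign_of_pos (mul_pos ht h)]

lemma sPow_smul {t : ℝ} (ht : 0 < t) (x k : ℝ) : sPow (t*x) k = t^k * sPow x k := by
  unfold sPow
  rw [abs_mul, abs_of_pos ht, Real.mul_rpow ht.le (abs_nonneg x), real_sign_mul_pos ht]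
  ring

lemma Fp_smul (p : ℝ) {t : ℝ} (ht : 0 < t) (a b : ℝ) :
    Fp p (t*a) (t*b) = t^p * Fp p a b := by
  unfold Fp
  rw [abs_mul, abs_of_pos ht, Real.mul_rpow ht.le (abs_nonneg b),
    abs_mul (t) (a), abs_of_pos ht, Real.mul_rpow ht.le (abs_nonneg a), sPow_smul ht]
  have h : t^(p-1) * t = t^p := by
    rw [← Real.rpow_add_one ht.ne' (p-1)]
    norm_num
  linear_combination (- (p * sPow a (p-1) * (b - a))) * h

lemma Fp_neg' (p a b : ℝ) : Fp p (-a) (-b) = Fp p a b := by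
  unfold Fp
  rw [abs_neg, abs_neg, sPow_neg']
  ring

lemma rpow_half_sq {x : ℝ} (hx : 0 ≤ x) (p : ℝ) : (x^(p/2))^2 = x^p := by
  rw [← Real.rpow_natCast (x^(p/2)) 2, ← Real.rpow_mul hx]
  norm_num

lemma Fp_one_eq {p b : ℝ} (hp : 1 < p) (hb : 0 < b) : Fp p 1 b = psi p (b^(p/2)) := by
  have hp0 : (0:ℝ) < p := by linarith
  have h1 : ((b^(p/2)) : ℝ)^(2/p) = b := by
    rw [← Real.rpow_mul hb.le]
    rw [show p/2 * (2/p) = 1 by field_simp, Real.rpow_one]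
  have h2 : ((b^(p/2)) : ℝ)^2 = b^p := rpow_half_sq hb.le p
  unfold Fp psi
  rw [h1, h2, sPow_one', abs_of_pos hb, abs_one, Real.one_rpow]
  ring

lemma main_one {p : ℝ} (hp : 1 < p) :
    ∃ c C : ℝ, 0 < c ∧ 0 < C ∧ ∀ b : ℝ,
      c * (sPow b (p/2) - 1)^2 ≤ Fp p 1 b ∧ Fp p 1 b ≤ C * (sPow b (p/2) - 1)^2 := by
  have hp0 : (0:ℝ) < p := by linarith
  obtain ⟨c, C, hc, hC, hpsi⟩ := psi_bounds hp
  have hm : (0:ℝ) < min 1 (p-1) / 2 := by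
    apply div_pos (lt_min one_pos (by linarith)) (by norm_num)
  refine ⟨min c (min 1 (p-1) / 2), max C (3*p), lt_min hc hm,
    lt_of_lt_of_le hC (le_max_left _ _), ?_⟩
  intro b
  rcases lt_or_ge 0 b with hb | hb
  · -- b > 0
    set s := b^(p/2) with hs
    have hs0 : 0 < s := Real.rpow_pos_of_pos hb _
    have hsP : sPow b (p/2) = s := sPow_of_pos hb _
    have hFeq : Fp p 1 b = psi p s := Fp_one_eq hp hb
    obtain ⟨h1, h2⟩ := hpsi s hs0
    rw [hsP, hFeq]
    constructor
    · calc min c (min 1 (p-1)/2) * (s-1)^2 ≤ c * (s-1)^2 :=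
            mul_le_mul_of_nonneg_right (min_le_left _ _) (sq_nonneg _)
        _ ≤ psi p s := h1
    · calc psi p s ≤ C * (s-1)^2 := h2
        _ ≤ max C (3*p) * (s-1)^2 :=
            mul_le_mul_of_nonneg_right (le_max_left _ _) (sq_nonneg _)
  · -- b ≤ 0
    set x := -b with hx
    have hx0 : (0:ℝ) ≤ x := by simp [hx]; linarith
    set y := x^(p/2) with hy
    have hy0 : (0:ℝ) ≤ y := Real.rpow_nonneg hx0 _
    have hy2 : y^2 = x^p := rpow_half_sq hx0 p
    have hsp : sPow b (p/2) = -y := by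
      rcases eq_or_lt_of_le hb with h|h
      · have hyz : y = 0 := by
          rw [hy, hx, h, neg_zero, Real.zero_rpow (by positivity : p/2 ≠ 0)]
        rw [hyz, h, sPow_zero', neg_zero]
      · rw [sPow, abs_of_neg h, Real.sign_of_neg h, hy, hx]
        ring
    have hFeq : Fp p 1 b = x^p + p*x + p - 1 := by
      unfold Fp
      rw [sPow_one', abs_of_nonpos hb, abs_one, Real.one_rpow, ← hx]
      have : b = -x := by rw [hx]; ring
      rw [this]; ring
    have hxy : x ≤ x^p + 1 := by
      rcases le_or_gt x 1 with h|h
      · have : (0:ℝ) ≤ x^p := Real.rpow_nonneg hx0 _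
        linarith
      · have h1 : x^(1:ℝ) ≤ x^p := Real.rpow_le_rpow_of_exponent_le h.le (by linarith)
        rw [Real.rpow_one] at h1
        have : (0:ℝ) ≤ x^p := Real.rpow_nonneg hx0 _
        linarith
    rw [hsp, hFeq]
    have hg : (-y - 1)^2 = (y+1)^2 := by ring
    rw [hg]
    have hpx : 0 ≤ p*x := mul_nonneg hp0.le hx0
    constructor
    · have hm1 : min 1 (p-1) ≤ 1 := min_le_left _ _
      have hm2 : min 1 (p-1) ≤ p-1 := min_le_right _ _
      have hle : min c (min 1 (p-1)/2) ≤ min 1 (p-1)/2 := min_le_right _ _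
      calc min c (min 1 (p-1)/2) * (y+1)^2 ≤ (min 1 (p-1)/2) * (y+1)^2 :=
            mul_le_mul_of_nonneg_right hle (sq_nonneg _)
        _ ≤ x^p + p*x + p - 1 := by nlinarith [sq_nonneg (y-1), hm.le]
    · have hle : 3*p ≤ max C (3*p) := le_max_right _ _
      have hxp : p*x ≤ p*(x^p+1) := mul_le_mul_of_nonneg_left hxy hp0.le
      calc x^p + p*x + p - 1 ≤ 3*p * (y+1)^2 := by nlinarith
        _ ≤ max C (3*p) * (y+1)^2 :=
            mul_le_mul_of_nonneg_right hle (sq_nonneg _)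

theorem Fp_comparable_sq (p : ℝ) (hp : 1 < p) :
    ∃ c C : ℝ, 0 < c ∧ 0 < C ∧ ∀ a b : ℝ,
      c * (sPow b (p / 2) - sPow a (p / 2)) ^ 2 ≤ Fp p a b ∧
      Fp p a b ≤ C * (sPow b (p / 2) - sPow a (p / 2)) ^ 2 := by
  have hp0 : (0:ℝ) < p := by linarith
  obtain ⟨c, C, hc, hC, hmain⟩ := main_one hp
  refine ⟨min c 1, max C 1, lt_min hc one_pos, lt_of_lt_of_le one_pos (le_max_right _ _), ?_⟩
  have key : ∀ a b : ℝ, 0 < a →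
      min c 1 * (sPow b (p/2) - sPow a (p/2))^2 ≤ Fp p a b ∧
      Fp p a b ≤ max C 1 * (sPow b (p/2) - sPow a (p/2))^2 := by
    intro a b ha
    have hab : a * (b/a) = b := by field_simp
    have hFp : Fp p a b = a^p * Fp p 1 (b/a) := by
      have := Fp_smul p ha 1 (b/a)
      rw [mul_one, hab] at this
      exact this
    have hGb : sPow b (p/2) = a^(p/2) * sPow (b/a) (p/2) := by
      have := sPow_smul ha (b/a) (p/2)
      rw [hab] at this
      exact this
    have hGa : sPow a (p/2) = a^(p/2) := sPow_of_pos ha _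
    set S := sPow (b/a) (p/2) with hS
    have h2 : (a^(p/2))^2 = a^p := rpow_half_sq ha.le p
    have hsq : (sPow b (p/2) - sPow a (p/2))^2 = a^p * (S - 1)^2 := by
      rw [hGb, hGa]
      calc (a^(p/2) * S - a^(p/2))^2 = (a^(p/2))^2 * (S-1)^2 := by ring
        _ = a^p * (S-1)^2 := by rw [h2]
    have hap : (0:ℝ) ≤ a^p := Real.rpow_nonneg ha.le _
    obtain ⟨h1, h2'⟩ := hmain (b/a)
    rw [hsq, hFp]
    constructor
    · calc min c 1 * (a^p * (S-1)^2) = a^p * (min c 1 * (S-1)^2) := by ring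
        _ ≤ a^p * Fp p 1 (b/a) := by
            apply mul_le_mul_of_nonneg_left ?_ hap
            calc min c 1 * (S-1)^2 ≤ c * (S-1)^2 :=
                  mul_le_mul_of_nonneg_right (min_le_left _ _) (sq_nonneg _)
              _ ≤ Fp p 1 (b/a) := h1
    · calc a^p * Fp p 1 (b/a) ≤ a^p * (max C 1 * (S-1)^2) := by
            apply mul_le_mul_of_nonneg_left ?_ hap
            calc Fp p 1 (b/a) ≤ C * (S-1)^2 := h2'
              _ ≤ max C 1 * (S-1)^2 :=
                  mul_le_mul_of_nonneg_right (le_max_left _ _) (sq_nonneg _)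
        _ = max C 1 * (a^p * (S-1)^2) := by ring
  intro a b
  rcases lt_trichotomy a 0 with ha|ha|ha
  · obtain ⟨k1, k2⟩ := key (-a) (-b) (by linarith)
    rw [Fp_neg', sPow_neg', sPow_neg'] at k1 k2
    have hg : (-sPow b (p/2) - -sPow a (p/2))^2 = (sPow b (p/2) - sPow a (p/2))^2 := by ring
    rw [hg] at k1 k2
    exact ⟨k1, k2⟩
  · subst ha
    have hF : Fp p 0 b = |b|^p := by
      unfold Fp
      rw [sPow_zero', abs_zero, Real.zero_rpow hp0.ne']
      ring
    have hG : (sPow b (p/2) - sPow 0 (p/2))^2 = |b|^p * (Real.sign b)^2 := by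
      rw [sPow_zero', sub_zero, sPow]
      rw [mul_pow, rpow_half_sq (abs_nonneg b)]
    rcases eq_or_ne b 0 with hb|hb
    · subst hb
      simp [hF, hG, Real.zero_rpow hp0.ne']
    · have hsgn : (Real.sign b)^2 = 1 := by
        rcases lt_trichotomy b 0 with h|h|h
        · rw [Real.sign_of_neg h]; norm_num
        · exact absurd h hb
        · rw [Real.sign_of_pos h]; norm_num
      rw [hF, hG, hsgn, mul_one]
      have habs : (0:ℝ) ≤ |b|^p := Real.rpow_nonneg (abs_nonneg b) _
      constructor
      · nlinarith [min_le_right c 1]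
      · nlinarith [le_max_right C 1]
  · exact key a b ha
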